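/- For every slope s with 1 < s < 2, there exists an integer i with 3 ≤ i such that T_s^i(1/2) ≥ 1/2; i.e. the quantity κ := min{ i ≥ 3 : c_i ≥ c } is finite. -/
import Mathlib


/-- The tent map with slope `s`. -/
noncomputable def T (s x : ℝ) : ℝ := min (s * x) (s * (1 - x))

theorem kappa_finite (s : ℝ) (hs1 : 1 < s) (hs2 : s < 2) :
    ∃ i : ℕ, 3 ≤ i ∧ (1 : ℝ) / 2 ≤ (T s)^[i] (1 / 2) := by
  have hs0 : (0:ℝ) < s := by linarith
  set c2 : ℝ := s * (1 - s / 2) with hc2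
  have hc2pos : 0 < c2 := by
    apply mul_pos hs0; linarith
  have hc2lt : c2 < 1 / 2 := by nlinarith
  have hT2 : (T s)^[2] (1 / 2) = c2 := by
    have h1 : T s (1 / 2) = s / 2 := by
      unfold T; norm_num; ring
    have h2 : T s (s / 2) = c2 := by
      unfold T
      rw [min_eq_right (by nlinarith)]
    have h3 : (T s)^[2] (1 / 2) = T s (T s (1 / 2)) := rfl
    rw [h3, h1, h2]
  have hTlow : ∀ x : ℝ, 0 ≤ x → x ≤ 1 / 2 → T s x = s * x := by
    intro x hx0 hx1
    unfold T
    exact min_eq_left (by nlinarith)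
  have key : ∀ n : ℕ, (∃ i : ℕ, 3 ≤ i ∧ (1 : ℝ) / 2 ≤ (T s)^[i] (1 / 2)) ∨
      ((T s)^[n + 2] (1 / 2) = s ^ n * c2 ∧ s ^ n * c2 < 1 / 2) := by
    intro n
    induction n with
    | zero =>
      right
      rw [pow_zero, one_mul]
      exact ⟨hT2, hc2lt⟩
    | succ n ih =>
      rcases ih with h | ⟨heq, hlt⟩
      · left; exact h
      · have hpos : 0 ≤ s ^ n * c2 := by positivity
        have hstep : (T s)^[n + 3] (1 / 2) = s ^ (n + 1) * c2 := by
          have : (T s)^[n + 3] (1 / 2) = T s ((T s)^[n + 2] (1 / 2)) := by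
            rw [← Function.iterate_succ_apply' (T s) (n + 2)]
          rw [this, heq, hTlow _ hpos hlt.le, pow_succ]
          ring
        by_cases hcase : (1:ℝ) / 2 ≤ s ^ (n + 1) * c2
        · left
          exact ⟨n + 3, by omega, by rw [hstep]; exact hcase⟩
        · right
          refine ⟨by simpa [Nat.add_comm, Nat.add_assoc] using hstep, by linarith⟩
  obtain ⟨n, hn⟩ := pow_unbounded_of_one_lt ((1:ℝ) / 2 / c2) hs1
  rcases key n with h | ⟨_, hlt⟩
  · exact h
  · exfalso
    have : (1:ℝ) / 2 / c2 < s ^ n := hn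
    rw [div_lt_iff₀ hc2pos] at this
    linarith
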